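/- arXiv:1802.01672 — 2 statements merged into one kernel-verified Lean document; each statement's English description precedes it below -/
import Mathlib

section
/- Let $Y:[0,\infty)\to\mathbb{R}$ be a càdlàg trajectory and $f\geq 0$ a continuous function. Set $t_0=\inf\{t\geq 0: f(Y_t)=0\}$ and $t_1=\inf\{t\geq 0: \int_0^t f(Y_u)^{-1}\,du=\infty\}$. If $t_0=t_1$, then the integral equation $\upsilon_t=\int_0^t f(Y_{\upsilon_s})\,ds$ has a unique solution, given by $\upsilon_t=\inf\{s\geq 0:\int_0^s f(Y_u)^{-1}\,du>t\}\wedge t_0$. -/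
open MeasureTheory Set Filter
open scoped ENNReal Topology

noncomputable section

/-- A solution (up to explosion) of the integral equation `υ_t = ∫_0^t f(Y_{υ_s}) ds`:
a function nondecreasing on `[0,∞)` satisfying the equation for all `t` where the
right-hand side is finite. -/
def IsTimeChangeSolution (Y f : ℝ → ℝ) (υ : ℝ → ℝ≥0∞) : Prop :=
  (∀ s t : ℝ, 0 ≤ s → s ≤ t → υ s ≤ υ t) ∧
  ∀ t : ℝ, 0 ≤ t →
    (∫⁻ s in Set.Ioc (0:ℝ) t, ENNReal.ofReal (f (Y ((υ s).toReal)))) ≠ ∞ →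
    υ t = ∫⁻ s in Set.Ioc (0:ℝ) t, ENNReal.ofReal (f (Y ((υ s).toReal)))

/-!
Write `φ = f ∘ Y` and `A(s) = ∫_0^s du / φ(u)` (the clock), so that the candidate is
`τ_t = A⁻¹(t) ∧ t₀`. Both directions rest on one substitution rule: if `V` is continuous and
nondecreasing on `[a, b]` and `ρ(a, s] = V(s) - V(a)`, then `V` pushes `ρ` on `(a, b]` forward to
Lebesgue measure on `(V(a), V(b)]`.

Existence: for `b = τ_t < ∞` take `V = A` on `[0, b]`. As `τ(A(u)) = u` there,
`∫_0^{A(b)} φ(τ_s) ds = ∫_0^b φ(u) dA(u) = b` (`φ > 0` before `t₀`). On `(A(b), t]` the time change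
is stuck at `b`, and `A(b) < t` forces `φ(b) = 0`: either `b = t₀`, a zero of `φ` by
right-continuity, or `b = A⁻¹(t) < t₀ = t₁`, which is impossible because `A`, finite and hence
right-continuous just after `b`, would not yet have passed `t` there. If `τ_t = ∞`, then `A ≤ t`
everywhere and the integral up to `t` dominates every `τ(A(u)) = u`.

Uniqueness: for a solution with `υ_t < ∞`, `υ` is continuous on `[0, t]` with `dυ = φ(υ) ds`
(`φ` is locally bounded), so the substitution `u = υ_s` gives
`A(υ_t) = |{s ≤ t : φ(υ_s) > 0}| ≤ t`, with equality while `υ_t < t₀`. As `A = ∞` beyond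
`t₁ = t₀`, this forces `υ_t ≤ t₀`, and then `υ_t = A⁻¹(t) ∧ t₀`. Finally `υ_t = ∞` is impossible
while `τ_t < ∞`: `υ = τ ≤ τ_t` wherever `υ` is finite, which makes the right-hand side at `t`
finite.
-/

theorem measure_Ioc_le_of_forall_lt {μ : Measure ℝ} [NullSingletonClass μ] {a b : ℝ}
    {x : ℝ≥0∞} (h : ∀ y < b, μ (Ioc a y) ≤ x) : μ (Ioc a b) ≤ x := by
  have hunion : Ioo a b = ⋃ y : Iio b, Ioc a y := by
    ext z
    simp only [mem_Ioo, mem_iUnion, mem_Ioc, Subtype.exists, mem_Iio, exists_prop]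
    exact ⟨fun hz => ⟨z, hz.2, hz.1, le_rfl⟩, fun ⟨y, hyb, hz, hzy⟩ => ⟨hz, hzy.trans_lt hyb⟩⟩
  rw [← measure_congr Ioo_ae_eq_Ioc, hunion, Monotone.measure_iUnion
    (s := fun y : Iio b => Ioc a (y : ℝ)) fun y y' hyy' => Ioc_subset_Ioc_right hyy']
  exact iSup_le fun y => h y y.2

theorem exists_gt_measure_Ioc_lt {μ : Measure ℝ} {a b : ℝ} {x : ℝ≥0∞}
    (hfin : ∃ u > b, μ (Ioc a u) ≠ ∞) (h : μ (Ioc a b) < x) : ∃ u > b, μ (Ioc a u) < x := by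
  have hinter : Ioc a b = ⋂ u : Ioi b, Ioc a u := by
    ext z
    simp only [mem_Ioc, mem_iInter, Subtype.forall, mem_Ioi]
    refine ⟨fun hz u hu => ⟨hz.1, hz.2.trans hu.le⟩, fun hz => ⟨(hz (b + 1) (by linarith)).1, ?_⟩⟩
    exact le_of_forall_gt_imp_ge_of_dense fun u hu => (hz u hu).2
  obtain ⟨u, hu, hfin⟩ := hfin
  rw [hinter, Monotone.measure_iInter (s := fun u : Ioi b => Ioc a (u : ℝ))
    (fun u u' huu' => Ioc_subset_Ioc_right huu') (fun _ => nullMeasurableSet_Ioc)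
    ⟨⟨u, hu⟩, hfin⟩] at h
  obtain ⟨u, hu⟩ := iInf_lt_iff.1 h
  exact ⟨u, u.2, hu⟩

theorem continuousOn_toReal_measure_Ioc {μ : Measure ℝ} [NullSingletonClass μ] {a b : ℝ}
    (h : μ (Ioc a b) ≠ ∞) : ContinuousOn (fun s => (μ (Ioc a s)).toReal) (Icc a b) := by
  have hint : IntegrableOn (fun _ => (1 : ℝ)) (Icc a b) μ :=
    integrableOn_const (by rwa [← measure_congr Ioc_ae_eq_Icc])
  simpa [measureReal_def] using intervalIntegral.continuousOn_primitive hint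

theorem exists_Ioc_inter_preimage_Iic_eq_Ioc {V : ℝ → ℝ} {a b y : ℝ} (hab : a ≤ b)
    (hV : ContinuousOn V (Icc a b)) (hVm : MonotoneOn V (Icc a b)) :
    ∃ c ∈ Icc a b, Ioc a b ∩ V ⁻¹' Iic y = Ioc a c ∧ V c = max (V a) (min (V b) y) := by
  have ha : a ∈ Icc a b := left_mem_Icc.2 hab
  have hb : b ∈ Icc a b := right_mem_Icc.2 hab
  rcases lt_or_ge y (V a) with hy | hy
  · refine ⟨a, ha, ?_, by rw [max_eq_left ((min_le_right _ _).trans hy.le)]⟩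
    rw [Ioc_self, eq_empty_iff_forall_notMem]
    exact fun s ⟨hs, hVs⟩ => hy.not_ge ((hVm ha (Ioc_subset_Icc_self hs) hs.1.le).trans hVs)
  set S := Icc a b ∩ V ⁻¹' Iic y
  have hSb : BddAbove S := ⟨b, fun s hs => hs.1.2⟩
  have hcS : sSup S ∈ S :=
    (hV.preimage_isClosed_of_isClosed isClosed_Icc isClosed_Iic).csSup_mem ⟨a, ha, hy⟩ hSb
  set c := sSup S
  have hS : ∀ s ∈ Icc a b, s ∈ S ↔ s ≤ c := fun s hs =>
    ⟨fun h => le_csSup hSb h, fun h => ⟨hs, (hVm hs hcS.1 h).trans hcS.2⟩⟩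
  refine ⟨c, hcS.1, ?_, ?_⟩
  · ext s
    constructor
    · rintro ⟨hs, hVs⟩
      exact ⟨hs.1, (hS s (Ioc_subset_Icc_self hs)).1 ⟨Ioc_subset_Icc_self hs, hVs⟩⟩
    · rintro ⟨has, hsc⟩
      have hs : s ∈ Icc a b := ⟨has.le, hsc.trans hcS.1.2⟩
      exact ⟨⟨has, hs.2⟩, ((hS s hs).2 hsc).2⟩
  rw [max_eq_right (le_min (hVm ha hb hab) hy)]
  rcases le_or_gt (V b) y with hby | hyb
  · rw [min_eq_left hby, le_antisymm hcS.1.2 ((hS b hb).1 ⟨hb, hby⟩)]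
  obtain ⟨d, hd, hVd⟩ :=
    intermediate_value_Icc hcS.1.2 (hV.mono (Icc_subset_Icc_left hcS.1.1)) ⟨hcS.2, hyb.le⟩
  have hdab : d ∈ Icc a b := ⟨hcS.1.1.trans hd.1, hd.2⟩
  rw [min_eq_right hyb.le, ← hVd, le_antisymm ((hS d hdab).1 ⟨hdab, hVd.le⟩) hd.1]

theorem map_restrict_Ioc_eq_volume {ρ : Measure ℝ} {V : ℝ → ℝ} {a b : ℝ} (hab : a ≤ b)
    (hV : ContinuousOn V (Icc a b)) (hVm : MonotoneOn V (Icc a b))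
    (hρ : ∀ s ∈ Icc a b, ρ (Ioc a s) = ENNReal.ofReal (V s - V a)) :
    (ρ.restrict (Ioc a b)).map V = volume.restrict (Ioc (V a) (V b)) := by
  have hVae : AEMeasurable V (ρ.restrict (Ioc a b)) :=
    (hV.mono Ioc_subset_Icc_self).aemeasurable measurableSet_Ioc
  have : IsFiniteMeasure (ρ.restrict (Ioc a b)) := ⟨by simp [hρ b ⟨hab, le_rfl⟩]⟩
  refine Measure.ext_of_Iic _ _ fun y => ?_
  obtain ⟨c, hc, hcV, hVc⟩ := exists_Ioc_inter_preimage_Iic_eq_Ioc (y := y) hab hV hVm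
  rw [Measure.map_apply_of_aemeasurable hVae measurableSet_Iic,
    Measure.restrict_apply' measurableSet_Ioc, Measure.restrict_apply' measurableSet_Ioc,
    inter_comm, hcV, hρ c hc, inter_comm, Ioc_inter_Iic, Real.volume_Ioc, hVc,
    ← max_sub_sub_right, sub_self, ENNReal.ofReal_max, ENNReal.ofReal_zero, zero_max]

theorem setLIntegral_comp_eq_of_continuousOn {ρ : Measure ℝ} {V : ℝ → ℝ} {a b : ℝ}
    (hab : a ≤ b) (hV : ContinuousOn V (Icc a b)) (hVm : MonotoneOn V (Icc a b))
    (hρ : ∀ s ∈ Icc a b, ρ (Ioc a s) = ENNReal.ofReal (V s - V a)) {h : ℝ → ℝ≥0∞}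
    (hh : Measurable h) : ∫⁻ s in Ioc a b, h (V s) ∂ρ = ∫⁻ u in Ioc (V a) (V b), h u := by
  rw [← map_restrict_Ioc_eq_volume hab hV hVm hρ, lintegral_map' hh.aemeasurable
    ((hV.mono Ioc_subset_Icc_self).aemeasurable measurableSet_Ioc)]

theorem le_ofReal_of_forall_lt {x : ℝ≥0∞} {y : ℝ} (h : ∀ u > y, x ≤ ENNReal.ofReal u) :
    x ≤ ENNReal.ofReal y := by
  by_contra! hlt
  obtain ⟨r, -, hyr, hrx⟩ := ENNReal.lt_iff_exists_real_btwn.1 hlt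
  exact (h r (ENNReal.ofReal_lt_ofReal_iff'.1 hyr).1).not_gt hrx

theorem measurable_of_continuousWithinAt_Ici {φ : ℝ → ℝ}
    (hφ : ∀ t, ContinuousWithinAt φ (Ici t) t) : Measurable φ := by
  have happrox : ∀ n : ℕ, Measurable fun t : ℝ => φ (⌈t * n⌉ / n) := fun n =>
    (measurable_from_top (f := fun k : ℤ => φ (k / n))).comp
      (Int.measurable_ceil.comp (measurable_id.mul_const _))
  refine measurable_of_tendsto_metrizable' atTop happrox (tendsto_pi_nhds.2 fun t => ?_)
  have hge : ∀ n : ℕ, 0 < n → t ≤ ⌈t * n⌉ / n := fun n hn => by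
    rw [le_div_iff₀ (by positivity)]
    exact Int.le_ceil _
  have hle : ∀ n : ℕ, 0 < n → (⌈t * n⌉ / n : ℝ) ≤ t + 1 / n := fun n hn => by
    rw [div_le_iff₀ (by positivity), add_mul, one_div_mul_cancel (by positivity)]
    exact (Int.ceil_lt_add_one _).le
  have hlim : Tendsto (fun n : ℕ => t + 1 / (n : ℝ)) atTop (𝓝 t) := by
    simpa using (tendsto_const_nhds (x := t)).add (tendsto_one_div_atTop_nhds_zero_nat (𝕜 := ℝ))
  refine (hφ t).tendsto.comp (tendsto_nhdsWithin_iff.2 ⟨?_, eventually_gt_atTop 0 |>.mono hge⟩)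
  exact tendsto_of_tendsto_of_tendsto_of_le_of_le' tendsto_const_nhds hlim
    (eventually_gt_atTop 0 |>.mono hge) (eventually_gt_atTop 0 |>.mono hle)

theorem IsCompact.bddAbove_image_of_cadlag {φ : ℝ → ℝ} {K : Set ℝ} (hK : IsCompact K)
    (hright : ∀ t, ContinuousWithinAt φ (Ici t) t)
    (hleft : ∀ t, ∃ l, Tendsto φ (𝓝[<] t) (𝓝 l)) : BddAbove (φ '' K) := by
  refine hK.induction_on (by simp) (fun s t hst ht => ht.mono (image_mono hst))
    (fun s t hs ht => by rw [image_union]; exact hs.union ht) fun x _ => ?_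
  obtain ⟨l, hl⟩ := hleft x
  have hev : ∀ᶠ u in 𝓝 x, φ u ≤ max (φ x) l + 1 := by
    rw [← nhdsLT_sup_nhdsGE, eventually_sup]
    exact ⟨hl.eventually (eventually_le_nhds (by linarith [le_max_right (φ x) l])),
      (hright x).eventually (eventually_le_nhds (by linarith [le_max_left (φ x) l]))⟩
  exact ⟨_, mem_nhdsWithin_of_mem_nhds hev, ⟨_, forall_mem_image.2 fun _ hu => hu⟩⟩

namespace TimeChange

variable {φ : ℝ → ℝ} {P : ℝ → Prop} {s t u b : ℝ} {x : ℝ≥0∞}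

def firstTime (P : ℝ → Prop) : ℝ≥0∞ := ⨅ t : {t : ℝ // 0 ≤ t ∧ P t}, ENNReal.ofReal t.1

theorem firstTime_le (hs : 0 ≤ s) (h : P s) : firstTime P ≤ ENNReal.ofReal s :=
  iInf_le (fun t : {t : ℝ // 0 ≤ t ∧ P t} => ENNReal.ofReal t.1) ⟨s, hs, h⟩

theorem le_firstTime (h : ∀ s, 0 ≤ s → P s → x ≤ ENNReal.ofReal s) : x ≤ firstTime P :=
  le_iInf fun t => h t.1 t.2.1 t.2.2

theorem not_of_lt_firstTime (hs : 0 ≤ s) (h : ENNReal.ofReal s < firstTime P) : ¬ P s :=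
  fun hP => (firstTime_le hs hP).not_gt h

theorem exists_of_firstTime_lt (h : firstTime P < x) :
    ∃ s, 0 ≤ s ∧ P s ∧ ENNReal.ofReal s < x := by
  obtain ⟨⟨s, hs, hP⟩, hlt⟩ := iInf_lt_iff.1 h
  exact ⟨s, hs, hP, hlt⟩

theorem eq_zero_of_firstTime_ne_top (hφ : ∀ t, ContinuousWithinAt φ (Ici t) t)
    (h : firstTime (φ · = 0) ≠ ∞) : φ (firstTime (φ · = 0)).toReal = 0 := by
  set z := (firstTime (φ · = 0)).toReal
  have hz : ENNReal.ofReal z = firstTime (φ · = 0) := ENNReal.ofReal_toReal h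
  by_contra hφz
  obtain ⟨w, hzw, hw⟩ := mem_nhdsGE_iff_exists_Ico_subset.1 ((hφ z).eventually_ne hφz)
  have hwz : ENNReal.ofReal w ≤ ENNReal.ofReal z := by
    refine hz ▸ le_firstTime fun s hs hφs => ENNReal.ofReal_le_ofReal (not_lt.1 fun hsw => ?_)
    rcases lt_or_ge s z with hsz | hzs
    · exact not_of_lt_firstTime hs
        (hz ▸ ENNReal.ofReal_lt_ofReal_iff'.2 ⟨hsz, hs.trans_lt hsz⟩) hφs
    · exact hw ⟨hzs, hsw⟩ hφs
  exact (ENNReal.ofReal_lt_ofReal_iff'.2 ⟨hzw, ENNReal.toReal_nonneg.trans_lt hzw⟩).not_ge hwz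

theorem ofReal_ne_zero_of_lt_firstTime (hφ0 : ∀ x, 0 ≤ φ x) (hs : 0 ≤ s)
    (h : ENNReal.ofReal s < firstTime (φ · = 0)) : ENNReal.ofReal (φ s) ≠ 0 := fun h0 =>
  not_of_lt_firstTime hs h (le_antisymm (ENNReal.ofReal_eq_zero.1 h0) (hφ0 s))

def clock (φ : ℝ → ℝ) (s : ℝ) : ℝ≥0∞ := ∫⁻ u in Ioc 0 s, (ENNReal.ofReal (φ u))⁻¹

abbrev clockMeasure (φ : ℝ → ℝ) : Measure ℝ :=
  volume.withDensity fun u => (ENNReal.ofReal (φ u))⁻¹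

theorem clockMeasure_Ioc (s : ℝ) : clockMeasure φ (Ioc 0 s) = clock φ s :=
  withDensity_apply _ measurableSet_Ioc

theorem clock_mono : Monotone (clock φ) := fun _ _ h =>
  lintegral_mono_set (Ioc_subset_Ioc_right h)

theorem clock_of_nonpos (hs : s ≤ 0) : clock φ s = 0 := by
  rw [clock, Ioc_eq_empty (not_lt.2 hs), Measure.restrict_empty, lintegral_zero_measure]

theorem clock_lt_clock (hφ : Measurable φ) (hs : 0 ≤ s) (hst : s < t) (hfin : clock φ s ≠ ∞) :
    clock φ s < clock φ t := by
  have hw : Measurable fun u => (ENNReal.ofReal (φ u))⁻¹ := hφ.ennreal_ofReal.inv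
  have hpos : clockMeasure φ (Ioc s t) ≠ 0 := by
    rw [clockMeasure, Ne, withDensity_apply_eq_zero' hw.aemeasurable]
    simp [hst]
  rw [← clockMeasure_Ioc, ← clockMeasure_Ioc, ← Ioc_union_Ioc_eq_Ioc hs hst.le,
    measure_union (Ioc_disjoint_Ioc_of_le le_rfl) measurableSet_Ioc]
  exact ENNReal.lt_add_right (clockMeasure_Ioc (φ := φ) s ▸ hfin) hpos

theorem clock_le_of_forall_lt (h : ∀ y < b, clock φ y ≤ x) : clock φ b ≤ x := by
  rw [← clockMeasure_Ioc]
  exact measure_Ioc_le_of_forall_lt fun y hy => (clockMeasure_Ioc y).trans_le (h y hy)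

theorem exists_gt_clock_lt (hfin : ∃ u > b, clock φ u ≠ ∞) (h : clock φ b < x) :
    ∃ u > b, clock φ u < x := by
  simp only [← clockMeasure_Ioc] at hfin h ⊢
  exact exists_gt_measure_Ioc_lt hfin h

theorem continuousOn_clock_toReal (hb : clock φ b ≠ ∞) :
    ContinuousOn (fun s => (clock φ s).toReal) (Icc 0 b) := by
  simp only [← clockMeasure_Ioc] at hb ⊢
  exact continuousOn_toReal_measure_Ioc hb

theorem clock_eq_top_of_lt (h : firstTime (clock φ · = ∞) < ENNReal.ofReal s) :
    clock φ s = ∞ := by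
  obtain ⟨u, -, hu, hus⟩ := exists_of_firstTime_lt h
  exact top_le_iff.1 (hu ▸ clock_mono (ENNReal.ofReal_lt_ofReal_iff'.1 hus).1.le)

theorem exists_gt_clock_ne_top (h : ENNReal.ofReal s < firstTime (clock φ · = ∞)) :
    ∃ u > s, clock φ u ≠ ∞ := by
  obtain ⟨u, hu, hsu, hut⟩ := ENNReal.lt_iff_exists_real_btwn.1 h
  exact ⟨u, (ENNReal.ofReal_lt_ofReal_iff'.1 hsu).1, not_of_lt_firstTime hu hut⟩

def clockInv (φ : ℝ → ℝ) (t : ℝ) : ℝ≥0∞ := firstTime (ENNReal.ofReal t < clock φ ·)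

def timeChange (φ : ℝ → ℝ) (t : ℝ) : ℝ≥0∞ := min (clockInv φ t) (firstTime (φ · = 0))

theorem clockInv_le (hs : 0 ≤ s) (h : ENNReal.ofReal t < clock φ s) :
    clockInv φ t ≤ ENNReal.ofReal s :=
  firstTime_le hs h

theorem le_clockInv (h : clock φ s ≤ ENNReal.ofReal t) : ENNReal.ofReal s ≤ clockInv φ t :=
  le_firstTime fun _ _ hu => ENNReal.ofReal_le_ofReal <| not_lt.1 fun hus =>
    (hu.trans_le ((clock_mono hus.le).trans h)).false

theorem clock_le_of_lt_clockInv (hs : 0 ≤ s) (h : ENNReal.ofReal s < clockInv φ t) :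
    clock φ s ≤ ENNReal.ofReal t :=
  not_lt.1 (not_of_lt_firstTime hs h)

theorem clockInv_mono : Monotone (clockInv φ) := fun _ _ htt' =>
  le_firstTime fun _ hs h => clockInv_le hs ((ENNReal.ofReal_le_ofReal htt').trans_lt h)

theorem clockInv_clock_toReal (hφ : Measurable φ) (hu : 0 ≤ u) (hfin : clock φ u ≠ ∞) :
    clockInv φ (clock φ u).toReal = ENNReal.ofReal u := by
  refine le_antisymm (le_ofReal_of_forall_lt fun u' hu' => clockInv_le (hu.trans hu'.le) ?_)
    (le_clockInv (ENNReal.ofReal_toReal hfin).ge)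
  rw [ENNReal.ofReal_toReal hfin]
  exact clock_lt_clock hφ hu hu' hfin

theorem timeChange_le_clockInv (t : ℝ) : timeChange φ t ≤ clockInv φ t := min_le_left _ _

theorem timeChange_le_firstTime (t : ℝ) : timeChange φ t ≤ firstTime (φ · = 0) :=
  min_le_right _ _

theorem timeChange_mono : Monotone (timeChange φ) := fun _ _ h =>
  min_le_min_right _ (clockInv_mono h)

theorem timeChange_clock_toReal (hφ : Measurable φ) (hu : 0 ≤ u) (hfin : clock φ u ≠ ∞)
    (hu0 : ENNReal.ofReal u ≤ firstTime (φ · = 0)) :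
    timeChange φ (clock φ u).toReal = ENNReal.ofReal u := by
  rw [timeChange, clockInv_clock_toReal hφ hu hfin, min_eq_left hu0]

theorem clock_le_of_timeChange_eq (h : timeChange φ t = ENNReal.ofReal b) :
    clock φ b ≤ ENNReal.ofReal t := by
  refine clock_le_of_forall_lt fun y hy => ?_
  rcases lt_or_ge y 0 with hy0 | hy0
  · rw [clock_of_nonpos hy0.le]
    exact zero_le
  refine clock_le_of_lt_clockInv hy0 (lt_of_lt_of_le ?_ (h ▸ timeChange_le_clockInv t))
  exact ENNReal.ofReal_lt_ofReal_iff'.2 ⟨hy, hy0.trans_lt hy⟩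

theorem setLIntegral_timeChange_Ioc_clock (hφ : Measurable φ) (hφ0 : ∀ x, 0 ≤ φ x)
    (hb : 0 ≤ b) (hb0 : ENNReal.ofReal b ≤ firstTime (φ · = 0)) (hfin : clock φ b ≠ ∞) :
    ∫⁻ x in Ioc 0 (clock φ b).toReal, ENNReal.ofReal (φ (timeChange φ x).toReal)
      = ENNReal.ofReal b := by
  have hfin' : ∀ s ∈ Icc 0 b, clock φ s ≠ ∞ := fun s hs =>
    ne_top_of_le_ne_top hfin (clock_mono hs.2)
  have hτ : Measurable fun x => ENNReal.ofReal (φ (timeChange φ x).toReal) :=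
    (hφ.comp (ENNReal.measurable_toReal.comp timeChange_mono.measurable)).ennreal_ofReal
  have hsubst := setLIntegral_comp_eq_of_continuousOn (ρ := clockMeasure φ) hb
    (continuousOn_clock_toReal hfin)
    (fun s _ s' hs' h => ENNReal.toReal_mono (hfin' s' hs') (clock_mono h))
    (fun s hs => by rw [clockMeasure_Ioc, clock_of_nonpos le_rfl, ENNReal.toReal_zero, sub_zero,
      ENNReal.ofReal_toReal (hfin' s hs)]) hτ
  rw [clock_of_nonpos le_rfl, ENNReal.toReal_zero] at hsubst
  have hw : Measurable fun u => (ENNReal.ofReal (φ u))⁻¹ := hφ.ennreal_ofReal.inv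
  calc _ = ∫⁻ s in Ioc 0 b, ENNReal.ofReal (φ (timeChange φ (clock φ s).toReal).toReal)
        ∂clockMeasure φ := hsubst.symm
    _ = ∫⁻ s in Ioc 0 b, ENNReal.ofReal (φ s) ∂clockMeasure φ :=
      setLIntegral_congr_fun measurableSet_Ioc fun s hs => by
        rw [timeChange_clock_toReal hφ hs.1.le (hfin' s (Ioc_subset_Icc_self hs))
          ((ENNReal.ofReal_le_ofReal hs.2).trans hb0), ENNReal.toReal_ofReal hs.1.le]
    _ = ∫⁻ s in Ioo 0 b, (ENNReal.ofReal (φ s))⁻¹ * ENNReal.ofReal (φ s) := by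
      rw [setLIntegral_withDensity_eq_setLIntegral_mul _ hw hφ.ennreal_ofReal measurableSet_Ioc,
        setLIntegral_congr Ioo_ae_eq_Ioc]
      rfl
    _ = ∫⁻ _ in Ioo 0 b, 1 := setLIntegral_congr_fun measurableSet_Ioo fun s hs =>
      ENNReal.inv_mul_cancel (ofReal_ne_zero_of_lt_firstTime hφ0 hs.1.le
        ((ENNReal.ofReal_lt_ofReal_iff'.2 ⟨hs.2, hs.1.trans hs.2⟩).trans_le hb0))
        ENNReal.ofReal_ne_top
    _ = ENNReal.ofReal b := by rw [setLIntegral_one, Real.volume_Ioo, sub_zero]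

theorem timeChange_eq_of_clock_lt (h : timeChange φ t = ENNReal.ofReal b)
    (hs : clock φ b < ENNReal.ofReal s) (hst : s ≤ t) : timeChange φ s = ENNReal.ofReal b := by
  refine le_antisymm (h ▸ timeChange_mono hst) (le_min ?_ (h ▸ timeChange_le_firstTime t))
  refine le_firstTime fun u _ hu => ENNReal.ofReal_le_ofReal (not_lt.1 fun hub => ?_)
  exact (hs.trans hu).not_ge (clock_mono hub.le)

theorem eq_zero_of_clock_lt (hφ : ∀ t, ContinuousWithinAt φ (Ici t) t) (hb : 0 ≤ b)
    (hexp : firstTime (φ · = 0) = firstTime (clock φ · = ∞))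
    (h : timeChange φ t = ENNReal.ofReal b) (hlt : clock φ b < ENNReal.ofReal t) : φ b = 0 := by
  rcases le_or_gt (firstTime (φ · = 0)) (clockInv φ t) with h0 | h0
  · have hb0 : firstTime (φ · = 0) = ENNReal.ofReal b := by
      rwa [timeChange, min_eq_right h0] at h
    simpa [hb0, hb] using eq_zero_of_firstTime_ne_top hφ (hb0 ▸ ENNReal.ofReal_ne_top)
  · have hC : clockInv φ t = ENNReal.ofReal b := by rwa [timeChange, min_eq_left h0.le] at h
    obtain ⟨u, hbu, hu⟩ := exists_gt_clock_lt (exists_gt_clock_ne_top (hexp ▸ hC ▸ h0)) hlt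
    have hub : ENNReal.ofReal u ≤ ENNReal.ofReal b := hC ▸ le_clockInv hu.le
    exact (hbu.not_ge ((ENNReal.ofReal_le_ofReal_iff hb).1 hub)).elim

theorem timeChange_eq_setLIntegral (hφ : ∀ t, ContinuousWithinAt φ (Ici t) t)
    (hφ0 : ∀ x, 0 ≤ φ x) (hexp : firstTime (φ · = 0) = firstTime (clock φ · = ∞)) (ht : 0 ≤ t)
    (hfin : timeChange φ t ≠ ∞) :
    timeChange φ t = ∫⁻ s in Ioc 0 t, ENNReal.ofReal (φ (timeChange φ s).toReal) := by
  set b := (timeChange φ t).toReal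
  have hb : 0 ≤ b := ENNReal.toReal_nonneg
  have hτt : timeChange φ t = ENNReal.ofReal b := (ENNReal.ofReal_toReal hfin).symm
  have hAb : clock φ b ≤ ENNReal.ofReal t := clock_le_of_timeChange_eq hτt
  have hAfin : clock φ b ≠ ∞ := ne_top_of_le_ne_top ENNReal.ofReal_ne_top hAb
  set a := (clock φ b).toReal
  have hAa : clock φ b = ENNReal.ofReal a := (ENNReal.ofReal_toReal hAfin).symm
  have ha : 0 ≤ a := ENNReal.toReal_nonneg
  have hat : a ≤ t := ENNReal.toReal_le_of_le_ofReal ht hAb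
  rw [← Ioc_union_Ioc_eq_Ioc ha hat, lintegral_union measurableSet_Ioc
    (Ioc_disjoint_Ioc_of_le le_rfl), setLIntegral_timeChange_Ioc_clock
    (measurable_of_continuousWithinAt_Ici hφ) hφ0 hb (hτt ▸ timeChange_le_firstTime t) hAfin, hτt]
  rcases hat.eq_or_lt with hat | hat
  · rw [hat, Ioc_self, Measure.restrict_empty, lintegral_zero_measure, add_zero]
  have hφb : φ b = 0 := eq_zero_of_clock_lt hφ hb hexp hτt
    (hAa ▸ ENNReal.ofReal_lt_ofReal_iff'.2 ⟨hat, ha.trans_lt hat⟩)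
  rw [setLIntegral_congr_fun measurableSet_Ioc (g := fun _ => 0) fun s hs => by
      rw [timeChange_eq_of_clock_lt hτt (hAa ▸ ENNReal.ofReal_lt_ofReal_iff'.2
        ⟨hs.1, ha.trans_lt hs.1⟩) hs.2, ENNReal.toReal_ofReal hb, hφb, ENNReal.ofReal_zero],
    lintegral_zero, add_zero]

theorem setLIntegral_eq_top_of_timeChange_eq_top (hφ : ∀ t, ContinuousWithinAt φ (Ici t) t)
    (hφ0 : ∀ x, 0 ≤ φ x) (hexp : firstTime (φ · = 0) = firstTime (clock φ · = ∞)) (ht : 0 ≤ t)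
    (htop : timeChange φ t = ∞) :
    ∫⁻ s in Ioc 0 t, ENNReal.ofReal (φ (timeChange φ s).toReal) = ∞ := by
  obtain ⟨hC, h0⟩ := min_eq_top.1 htop
  refine ENNReal.eq_top_of_forall_nnreal_le fun r => ?_
  have hAr : clock φ r ≤ ENNReal.ofReal t :=
    clock_le_of_lt_clockInv r.coe_nonneg (hC ▸ ENNReal.ofReal_lt_top)
  have hAfin : clock φ r ≠ ∞ := ne_top_of_le_ne_top ENNReal.ofReal_ne_top hAr
  have hτ := timeChange_clock_toReal (measurable_of_continuousWithinAt_Ici hφ) r.coe_nonneg hAfin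
    (h0 ▸ le_top)
  calc (r : ℝ≥0∞) = timeChange φ (clock φ r).toReal := by rw [hτ, ENNReal.ofReal_coe_nnreal]
    _ = ∫⁻ s in Ioc 0 (clock φ r).toReal, ENNReal.ofReal (φ (timeChange φ s).toReal) :=
      timeChange_eq_setLIntegral hφ hφ0 hexp ENNReal.toReal_nonneg (hτ ▸ ENNReal.ofReal_ne_top)
    _ ≤ _ := lintegral_mono_set (Ioc_subset_Ioc_right (ENNReal.toReal_le_of_le_ofReal ht hAr))

-- The equation with rate `φ` is the case `Y = id`, `f = φ` of `IsTimeChangeSolution`.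
theorem isTimeChangeSolution_timeChange (hφ : ∀ t, ContinuousWithinAt φ (Ici t) t)
    (hφ0 : ∀ x, 0 ≤ φ x) (hexp : firstTime (φ · = 0) = firstTime (clock φ · = ∞)) :
    IsTimeChangeSolution id φ (timeChange φ) := by
  refine ⟨fun s t _ hst => timeChange_mono hst, fun t ht hint => ?_⟩
  by_cases htop : timeChange φ t = ∞
  · exact absurd (setLIntegral_eq_top_of_timeChange_eq_top hφ hφ0 hexp ht htop) hint
  · exact timeChange_eq_setLIntegral hφ hφ0 hexp ht htop

theorem setLIntegral_ofReal_comp_lt_top {V : ℝ → ℝ} {K : ℝ} (hK : BddAbove (φ '' Icc 0 K))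
    (hV : ∀ s ∈ Ioc 0 t, V s ∈ Icc 0 K) : ∫⁻ s in Ioc 0 t, ENNReal.ofReal (φ (V s)) < ∞ := by
  obtain ⟨M, hM⟩ := hK
  exact setLIntegral_lt_top_of_le_nnreal (by simp) ⟨M.toNNReal, fun s hs =>
    ENNReal.ofReal_le_ofReal (hM (mem_image_of_mem φ (hV s hs)))⟩

end TimeChange

namespace IsTimeChangeSolution

open TimeChange

variable {φ : ℝ → ℝ} {υ : ℝ → ℝ≥0∞} {t : ℝ}

theorem map_zero (hυ : IsTimeChangeSolution id φ υ) : υ 0 = 0 := by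
  simpa using hυ.2 0 le_rfl (by simp)

theorem eq_setLIntegral (hυ : IsTimeChangeSolution id φ υ) (hbdd : ∀ K, BddAbove (φ '' Icc 0 K))
    (ht : 0 ≤ t) (hfin : υ t ≠ ∞) :
    υ t = ∫⁻ s in Ioc 0 t, ENNReal.ofReal (φ (υ s).toReal) :=
  hυ.2 t ht (setLIntegral_ofReal_comp_lt_top (hbdd _) fun s hs =>
    ⟨ENNReal.toReal_nonneg, ENNReal.toReal_mono hfin (hυ.1 s t hs.1.le hs.2)⟩).ne

theorem clock_toReal_eq (hυ : IsTimeChangeSolution id φ υ) (hφ : Measurable φ)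
    (hbdd : ∀ K, BddAbove (φ '' Icc 0 K)) (ht : 0 ≤ t) (hfin : υ t ≠ ∞) :
    clock φ (υ t).toReal = ∫⁻ s in Ioc 0 t,
      ENNReal.ofReal (φ (υ s).toReal) * (ENNReal.ofReal (φ (υ s).toReal))⁻¹ := by
  have hfin' : ∀ s ∈ Icc 0 t, υ s ≠ ∞ := fun s hs =>
    ne_top_of_le_ne_top hfin (hυ.1 s t hs.1 hs.2)
  have hVm : MonotoneOn (fun s => (υ s).toReal) (Icc 0 t) := fun s hs s' hs' h =>
    ENNReal.toReal_mono (hfin' s' hs') (hυ.1 s s' hs.1 h)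
  set ρ := volume.withDensity fun s => ENNReal.ofReal (φ (υ s).toReal)
  have hρ : ∀ s ∈ Icc 0 t, ρ (Ioc 0 s) = υ s := fun s hs => by
    rw [withDensity_apply _ measurableSet_Ioc, ← hυ.eq_setLIntegral hbdd hs.1 (hfin' s hs)]
  have hV : ContinuousOn (fun s => (υ s).toReal) (Icc 0 t) :=
    (continuousOn_toReal_measure_Ioc (hρ t ⟨ht, le_rfl⟩ ▸ hfin)).congr fun s hs => by
      simp only [hρ s hs]
  have hw : Measurable fun u => (ENNReal.ofReal (φ u))⁻¹ := hφ.ennreal_ofReal.inv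
  have hsubst := setLIntegral_comp_eq_of_continuousOn ht hV hVm (fun s hs => by
    rw [hρ s hs, hυ.map_zero, ENNReal.toReal_zero, sub_zero, ENNReal.ofReal_toReal (hfin' s hs)]) hw
  have hrate :
      AEMeasurable (fun s => ENNReal.ofReal (φ (υ s).toReal)) (volume.restrict (Ioc 0 t)) :=
    (hφ.comp_aemeasurable (aemeasurable_restrict_of_monotoneOn measurableSet_Ioc
      (hVm.mono Ioc_subset_Icc_self))).ennreal_ofReal
  rw [hυ.map_zero, ENNReal.toReal_zero,
    setLIntegral_withDensity_eq_setLIntegral_mul_non_measurable₀ _ hrate _ measurableSet_Ioc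
      (ae_of_all _ fun _ => ENNReal.ofReal_lt_top)] at hsubst
  exact hsubst.symm

theorem eq_timeChange_of_ne_top (hυ : IsTimeChangeSolution id φ υ) (hφ : Measurable φ)
    (hbdd : ∀ K, BddAbove (φ '' Icc 0 K)) (hφ0 : ∀ x, 0 ≤ φ x)
    (hexp : firstTime (φ · = 0) = firstTime (clock φ · = ∞)) (ht : 0 ≤ t) (hfin : υ t ≠ ∞) :
    υ t = timeChange φ t := by
  set W := (υ t).toReal
  have hυW : υ t = ENNReal.ofReal W := (ENNReal.ofReal_toReal hfin).symm
  have hAW := hυ.clock_toReal_eq hφ hbdd ht hfin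
  have hvol : ∫⁻ _ in Ioc 0 t, 1 = ENNReal.ofReal t := by
    rw [setLIntegral_one, Real.volume_Ioc, sub_zero]
  have hAt : clock φ W ≤ ENNReal.ofReal t :=
    hAW ▸ hvol ▸ setLIntegral_mono' measurableSet_Ioc fun s _ => ENNReal.mul_inv_le_one _
  have hW0 : υ t ≤ firstTime (φ · = 0) := not_lt.1 fun h =>
    ENNReal.ofReal_ne_top (top_le_iff.1 (clock_eq_top_of_lt (hexp ▸ hυW ▸ h) ▸ hAt))
  rcases hW0.lt_or_eq with hlt | heq
  · have hAeq : clock φ W = ENNReal.ofReal t := by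
      rw [hAW, ← hvol]
      refine setLIntegral_congr_fun measurableSet_Ioc fun s hs => ENNReal.mul_inv_cancel ?_
        ENNReal.ofReal_ne_top
      have hυs : υ s ≤ υ t := hυ.1 s t hs.1.le hs.2
      refine ofReal_ne_zero_of_lt_firstTime hφ0 ENNReal.toReal_nonneg ?_
      rw [ENNReal.ofReal_toReal (ne_top_of_le_ne_top hfin hυs)]
      exact hυs.trans_lt hlt
    have hC := clockInv_clock_toReal hφ ENNReal.toReal_nonneg (hAeq ▸ ENNReal.ofReal_ne_top)
    rw [hAeq, ENNReal.toReal_ofReal ht] at hC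
    rw [timeChange, hC, ← hυW, min_eq_left hlt.le]
  · rw [timeChange, ← heq, min_eq_right (hυW ▸ le_clockInv hAt)]

theorem eq_timeChange (hυ : IsTimeChangeSolution id φ υ) (hφ : Measurable φ)
    (hbdd : ∀ K, BddAbove (φ '' Icc 0 K)) (hφ0 : ∀ x, 0 ≤ φ x)
    (hexp : firstTime (φ · = 0) = firstTime (clock φ · = ∞)) (ht : 0 ≤ t) :
    υ t = timeChange φ t := by
  rcases ne_or_eq (υ t) ∞ with hfin | hfin
  · exact hυ.eq_timeChange_of_ne_top hφ hbdd hφ0 hexp ht hfin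
  by_contra hne
  have hτ : timeChange φ t ≠ ∞ := hfin ▸ Ne.symm hne
  have hυs : ∀ s ∈ Ioc 0 t, (υ s).toReal ∈ Icc 0 (timeChange φ t).toReal := fun s hs => by
    refine ⟨ENNReal.toReal_nonneg, ?_⟩
    rcases ne_or_eq (υ s) ∞ with hs' | hs'
    · rw [hυ.eq_timeChange_of_ne_top hφ hbdd hφ0 hexp hs.1.le hs']
      exact ENNReal.toReal_mono hτ (timeChange_mono hs.2)
    · simp [hs']
  have hint := setLIntegral_ofReal_comp_lt_top (hbdd _) hυs
  exact hint.ne (hfin ▸ hυ.2 t ht hint.ne).symm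

end IsTimeChangeSolution

open TimeChange in
theorem time_change_lemma
    (Y : ℝ → ℝ) (f : ℝ → ℝ)
    -- `Y` is a càdlàg trajectory:
    (hY_right : ∀ t : ℝ, Tendsto Y (nhdsWithin t (Set.Ici t)) (nhds (Y t)))
    (hY_left : ∀ t : ℝ, ∃ l : ℝ, Tendsto Y (nhdsWithin t (Set.Iio t)) (nhds l))
    (hf : Continuous f) (hf0 : ∀ x, 0 ≤ f x)
    -- `t0 = inf{t ≥ 0 : f(Y_t) = 0}`, with the convention `inf ∅ = ∞`:
    (t0 : ℝ≥0∞)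
    (ht0 : t0 = ⨅ t : {t : ℝ // 0 ≤ t ∧ f (Y t) = 0}, ENNReal.ofReal t.1)
    -- `t1 = inf{t ≥ 0 : ∫_0^t f(Y_u)⁻¹ du = ∞}`:
    (t1 : ℝ≥0∞)
    (ht1 : t1 = ⨅ t : {t : ℝ // 0 ≤ t ∧
        (∫⁻ u in Set.Ioc (0:ℝ) t, (ENNReal.ofReal (f (Y u)))⁻¹) = ∞},
        ENNReal.ofReal t.1)
    (heq : t0 = t1) :
    -- the explicit candidate `υ_t = inf{s ≥ 0 : ∫_0^s f(Y_u)⁻¹ du > t} ∧ t0`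
    -- is the unique solution of the integral equation:
    IsTimeChangeSolution Y f (fun t =>
      min (⨅ s : {s : ℝ // 0 ≤ s ∧
          ENNReal.ofReal t < ∫⁻ u in Set.Ioc (0:ℝ) s, (ENNReal.ofReal (f (Y u)))⁻¹},
          ENNReal.ofReal s.1) t0) ∧
    ∀ υ : ℝ → ℝ≥0∞, IsTimeChangeSolution Y f υ → ∀ t : ℝ, 0 ≤ t →
      υ t = min (⨅ s : {s : ℝ // 0 ≤ s ∧
          ENNReal.ofReal t < ∫⁻ u in Set.Ioc (0:ℝ) s, (ENNReal.ofReal (f (Y u)))⁻¹},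
          ENNReal.ofReal s.1) t0 := by
  have hright : ∀ t, ContinuousWithinAt (fun u => f (Y u)) (Ici t) t := fun t =>
    (hf.tendsto _).comp (hY_right t)
  have hleft : ∀ t, ∃ l, Tendsto (fun u => f (Y u)) (𝓝[<] t) (𝓝 l) := fun t =>
    (hY_left t).elim fun l hl => ⟨f l, (hf.tendsto l).comp hl⟩
  have hbdd : ∀ K, BddAbove ((fun u => f (Y u)) '' Icc 0 K) := fun _ =>
    isCompact_Icc.bddAbove_image_of_cadlag hright hleft
  subst ht0 ht1
  exact ⟨isTimeChangeSolution_timeChange hright (fun _ => hf0 _) heq, fun υ hυ t ht =>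
    IsTimeChangeSolution.eq_timeChange (φ := fun u => f (Y u)) hυ
      (measurable_of_continuousWithinAt_Ici hright) hbdd (fun _ => hf0 _) heq ht⟩
end
end

section
/- Let $Y$ be a Markov process on a locally compact metrizable space $E$ with killing time $\zeta$ such that (a) $\mathtt{P}_x(\zeta\in(0,\infty))=1$ for all $x\in E$, and (b) $x\mapsto \mathtt{E}_x[f(\zeta)]$ is continuous on $E$ for every bounded continuous $f$ on $[0,\infty)$. Then the potential measure satisfies $G_Y(y,K)<\infty$ for every $y\in E$ and every compact $K\subseteq E$. -/
open MeasureTheory Set Filter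
open scoped ENNReal Topology

/-!
By weak continuity of the law of `ζ` (portmanteau), every point has a neighbourhood of the form
`A = {z | c + P_z(ζ > a) ≤ 1}` with `c > 0`, i.e. `P_z(ζ ≤ a) ≥ c` on `A`. By the Markov
property at time `t`, `c · P_y(Y_t ∈ A) ≤ P_y(t < ζ ≤ t + a)`, and by Tonelli
`∫ P_y(t < ζ ≤ t + a) dt = a`, so `A` has potential at most `a / c`. Finitely many such
neighbourhoods cover `K`.
-/

open ProbabilityTheory

/-- Majorants are needed because `t ↦ κ t y A` need not be measurable, and the Lebesgue integral
of a non-measurable function is not subadditive. -/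
def HasIntegrableMajorant {α : Type*} [MeasurableSpace α] (f : α → ℝ≥0∞) (m : Measure α) :
    Prop :=
  ∃ g : α → ℝ≥0∞, Measurable g ∧ f ≤ᵐ[m] g ∧ ∫⁻ a, g a ∂m ≠ ∞

theorem HasIntegrableMajorant.lintegral_lt_top {α : Type*} [MeasurableSpace α]
    {f : α → ℝ≥0∞} {m : Measure α} (hf : HasIntegrableMajorant f m) : ∫⁻ a, f a ∂m < ∞ := by
  obtain ⟨g, -, hfg, hg⟩ := hf
  exact (lintegral_mono_ae hfg).trans_lt hg.lt_top

theorem IsCompact.hasIntegrableMajorant_of_nhds {T E : Type*} [MeasurableSpace T]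
    [MeasurableSpace E] [TopologicalSpace E] {m : Measure T} {μ : T → Measure E} {K : Set E}
    (hK : IsCompact K) (hloc : ∀ x ∈ K, ∃ A ∈ 𝓝 x, HasIntegrableMajorant (fun t ↦ μ t A) m) :
    HasIntegrableMajorant (fun t ↦ μ t K) m := by
  refine hK.induction_on ?_ ?_ ?_ fun x hx ↦ ?_
  · exact ⟨0, measurable_const, ae_of_all _ fun t ↦ by simp, by simp⟩
  · rintro s t hst ⟨g, hg, hle, hfin⟩
    exact ⟨g, hg, hle.mono fun τ h ↦ (measure_mono hst).trans h, hfin⟩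
  · rintro s t ⟨g, hg, hgle, hgfin⟩ ⟨h, hh, hhle, hhfin⟩
    refine ⟨fun τ ↦ g τ + h τ, hg.add hh, ?_, ?_⟩
    · filter_upwards [hgle, hhle] with τ h₁ h₂
      exact (measure_union_le _ _).trans (add_le_add h₁ h₂)
    · rw [lintegral_add_left hg]
      exact ENNReal.add_ne_top.2 ⟨hgfin, hhfin⟩
  · obtain ⟨A, hA, hmaj⟩ := hloc x hx
    exact ⟨A, mem_nhdsWithin_of_mem_nhds hA, hmaj⟩

theorem measurableSet_lt_and_le_add (a : ℝ) :
    MeasurableSet {p : ℝ × ℝ | p.1 < p.2 ∧ p.2 ≤ p.1 + a} :=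
  (measurableSet_lt measurable_fst measurable_snd).inter
    (measurableSet_le measurable_snd (measurable_fst.add_const a))

theorem measure_Ioc_add_eq_lintegral (μ : Measure ℝ) (t a : ℝ) :
    μ (Ioc t (t + a)) =
      ∫⁻ s, {p : ℝ × ℝ | p.1 < p.2 ∧ p.2 ≤ p.1 + a}.indicator 1 (t, s) ∂μ := by
  rw [← lintegral_indicator_one measurableSet_Ioc]
  rfl

theorem measurable_measure_Ioc_add (μ : Measure ℝ) [SFinite μ] (a : ℝ) :
    Measurable fun t ↦ μ (Ioc t (t + a)) := by
  simp_rw [measure_Ioc_add_eq_lintegral]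
  exact (measurable_one.indicator (measurableSet_lt_and_le_add a)).lintegral_prod_right'

theorem lintegral_measure_Ioc_add (μ : Measure ℝ) [SFinite μ] (a : ℝ) :
    ∫⁻ t, μ (Ioc t (t + a)) = ENNReal.ofReal a * μ univ := by
  have hS := measurableSet_lt_and_le_add a
  have hslice : ∀ s : ℝ, {t : ℝ | t < s ∧ s ≤ t + a} = Ico (s - a) s := fun s ↦ by
    ext t; simp only [mem_ofPred_eq, mem_Ico]; constructor <;> rintro ⟨h₁, h₂⟩ <;>
      exact ⟨by linarith, by linarith⟩
  calc ∫⁻ t, μ (Ioc t (t + a))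
      = ∫⁻ s, (∫⁻ t, {p : ℝ × ℝ | p.1 < p.2 ∧ p.2 ≤ p.1 + a}.indicator 1 (t, s)) ∂μ := by
        simp_rw [measure_Ioc_add_eq_lintegral]
        exact lintegral_lintegral_swap
          (f := fun t s ↦ {p : ℝ × ℝ | p.1 < p.2 ∧ p.2 ≤ p.1 + a}.indicator 1 (t, s))
          (measurable_one.indicator hS).aemeasurable
    _ = ∫⁻ s, ENNReal.ofReal a ∂μ := lintegral_congr fun s ↦ by
        change ∫⁻ t, {t : ℝ | t < s ∧ s ≤ t + a}.indicator 1 t = _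
        rw [lintegral_indicator_one (hslice s ▸ measurableSet_Ico), hslice, Real.volume_Ico,
          sub_sub_cancel]
    _ = ENNReal.ofReal a * μ univ := lintegral_const _

theorem mul_measure_add_lintegral_le_measure_univ {E : Type*} [MeasurableSpace E]
    {μ : Measure E} {g : E → ℝ≥0∞} {A : Set E} {c : ℝ≥0∞} (hA : MeasurableSet A)
    (hg : ∀ z, g z ≤ 1) (hAg : ∀ z ∈ A, c + g z ≤ 1) :
    c * μ A + ∫⁻ z, g z ∂μ ≤ μ univ :=
  calc c * μ A + ∫⁻ z, g z ∂μ = ∫⁻ z, (A.indicator (fun _ ↦ c) z + g z) ∂μ := by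
        rw [lintegral_add_left (measurable_const.indicator hA), lintegral_indicator_const hA]
    _ ≤ ∫⁻ _, 1 ∂μ := lintegral_mono fun z ↦ by
        by_cases hz : z ∈ A
        · simpa [hz] using hAg z hz
        · simpa [hz] using hg z
    _ = μ univ := lintegral_one

theorem eventually_lt_measure_of_isOpen {X Ω : Type*} [TopologicalSpace X]
    [MeasurableSpace Ω] [TopologicalSpace Ω] [OpensMeasurableSpace Ω] [HasOuterApproxClosed Ω]
    {ν : X → Measure Ω} [∀ x, IsProbabilityMeasure (ν x)]
    (hν : ∀ f : BoundedContinuousFunction Ω ℝ, Continuous fun x ↦ ∫ ω, f ω ∂(ν x))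
    {x : X} {G : Set Ω} (hG : IsOpen G) {c : ℝ≥0∞} (hc : c < ν x G) :
    ∀ᶠ z in 𝓝 x, c < ν z G := by
  let P : X → ProbabilityMeasure Ω := fun z ↦ ⟨ν z, inferInstance⟩
  have hP : Tendsto P (𝓝 x) (𝓝 (P x)) :=
    ProbabilityMeasure.tendsto_iff_forall_integral_tendsto.2 fun f ↦ (hν f).tendsto x
  exact eventually_lt_of_lt_liminf
    (hc.trans_le (ProbabilityMeasure.le_liminf_measure_open_of_tendsto hP hG))

section KilledProcess

variable {E : Type*} [MeasurableSpace E] {κ : ℝ → Kernel E E} {ν : E → Measure ℝ}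

theorem mul_kernel_le_measure_Ioc
    (hsub : ∀ t : ℝ, ∀ x : E, κ t x univ ≤ 1)
    (hsemi : ∀ s t : ℝ, 0 ≤ s → 0 ≤ t → ∀ x : E, ∀ A : Set E, MeasurableSet A →
      κ (s + t) x A = ∫⁻ y, κ t y A ∂(κ s x))
    (hlink : ∀ t : ℝ, 0 ≤ t → ∀ x : E, κ t x univ = ν x (Ioi t))
    {y : E} [IsFiniteMeasure (ν y)] {t a : ℝ} (ht : 0 ≤ t) (ha : 0 ≤ a) (c : ℝ≥0∞) :
    c * κ t y {z | c + κ a z univ ≤ 1} ≤ ν y (Ioc t (t + a)) := by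
  have hA : MeasurableSet {z | c + κ a z univ ≤ 1} :=
    measurableSet_le (measurable_const.add (Kernel.measurable_coe _ .univ)) measurable_const
  have h := mul_measure_add_lintegral_le_measure_univ (μ := κ t y) hA (hsub a) fun _ hz ↦ hz
  rw [← hsemi t a ht ha y univ .univ, hlink t ht, hlink (t + a) (by linarith),
    ← Ioc_union_Ioi_eq_Ioi (by linarith : t ≤ t + a),
    measure_union (Ioc_disjoint_Ioi le_rfl) measurableSet_Ioi] at h
  exact ENNReal.le_of_add_le_add_right (measure_ne_top _ _) h

theorem hasIntegrableMajorant_kernel_setOf_add_le_one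
    (hsub : ∀ t : ℝ, ∀ x : E, κ t x univ ≤ 1)
    (hsemi : ∀ s t : ℝ, 0 ≤ s → 0 ≤ t → ∀ x : E, ∀ A : Set E, MeasurableSet A →
      κ (s + t) x A = ∫⁻ y, κ t y A ∂(κ s x))
    (hlink : ∀ t : ℝ, 0 ≤ t → ∀ x : E, κ t x univ = ν x (Ioi t))
    (y : E) [IsFiniteMeasure (ν y)] {a : ℝ} (ha : 0 ≤ a) {c : ℝ≥0∞} (hc₀ : c ≠ 0)
    (hc : c ≠ ∞) :
    HasIntegrableMajorant (fun t ↦ κ t y {z | c + κ a z univ ≤ 1})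
      (volume.restrict (Ici 0)) := by
  refine ⟨fun t ↦ c⁻¹ * ν y (Ioc t (t + a)), (measurable_measure_Ioc_add _ a).const_mul _,
    (ae_restrict_mem measurableSet_Ici).mono fun t ht ↦ ?_, ?_⟩
  · exact (ENNReal.mul_le_iff_le_inv hc₀ hc).1
      (mul_kernel_le_measure_Ioc hsub hsemi hlink ht ha c)
  · rw [lintegral_const_mul _ (measurable_measure_Ioc_add _ a)]
    refine ENNReal.mul_ne_top (ENNReal.inv_ne_top.2 hc₀) (ne_top_of_le_ne_top ?_
      (setLIntegral_le_lintegral _ _))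
    rw [lintegral_measure_Ioc_add]
    exact ENNReal.mul_ne_top ENNReal.ofReal_ne_top (measure_ne_top _ _)

theorem exists_mem_nhds_add_kernel_le_one [TopologicalSpace E]
    [∀ x, IsProbabilityMeasure (ν x)]
    (hlink : ∀ t : ℝ, 0 ≤ t → ∀ x : E, κ t x univ = ν x (Ioi t))
    (hb : ∀ f : BoundedContinuousFunction ℝ ℝ, Continuous fun x : E ↦ ∫ t : ℝ, f t ∂(ν x))
    (x : E) : ∃ a : ℝ, 0 ≤ a ∧ ∃ c : ℝ≥0∞, c ≠ 0 ∧ c ≠ ∞ ∧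
      {z | c + κ a z univ ≤ 1} ∈ 𝓝 x := by
  obtain ⟨n, hn⟩ : ∃ n : ℕ, 0 < ν x (Iio (n : ℝ)) := by
    refine exists_measure_pos_of_not_measure_iUnion_null ?_
    rw [show ⋃ n : ℕ, Iio (n : ℝ) = univ from
      eq_univ_of_forall fun t ↦ mem_iUnion.2 (exists_nat_gt t)]
    simp
  refine ⟨n, n.cast_nonneg, ν x (Iio n) / 2, (ENNReal.half_pos hn.ne').ne',
    ENNReal.div_ne_top (measure_ne_top _ _) two_ne_zero, ?_⟩
  filter_upwards [eventually_lt_measure_of_isOpen hb isOpen_Iio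
    (ENNReal.half_lt_self hn.ne' (measure_ne_top _ _))] with z hz
  calc ν x (Iio n) / 2 + κ n z univ ≤ ν z (Iio n) + ν z (Ioi n) := by
        rw [hlink n n.cast_nonneg z]
        gcongr
    _ = ν z (Iio n ∪ Ioi n) := (measure_union Ioi_disjoint_Iio_same.symm measurableSet_Ioi).symm
    _ ≤ 1 := prob_le_one

end KilledProcess

theorem getoor_transience_general
    {E : Type*} [MeasurableSpace E] [TopologicalSpace E]
    (κ : ℝ → ProbabilityTheory.Kernel E E)
    (hsub : ∀ t : ℝ, ∀ x : E, κ t x Set.univ ≤ 1)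
    -- Chapman–Kolmogorov semigroup property
    (hsemi : ∀ s t : ℝ, 0 ≤ s → 0 ≤ t → ∀ x : E, ∀ A : Set E, MeasurableSet A →
      κ (s + t) x A = ∫⁻ y, κ t y A ∂(κ s x))
    -- the law of the killing time
    (ν : E → Measure ℝ) (hνprob : ∀ x, IsProbabilityMeasure (ν x))
    -- survival link: `P_x(ζ > t) = κ t x univ`
    (hlink : ∀ t : ℝ, 0 ≤ t → ∀ x : E, κ t x Set.univ = ν x (Set.Ioi t))
    -- (b) weak continuity of the killing time in the initial condition
    (hb : ∀ f : BoundedContinuousFunction ℝ ℝ,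
      Continuous fun x : E => ∫ t : ℝ, f t ∂(ν x)) :
    ∀ y : E, ∀ K : Set E, IsCompact K →
      (∫⁻ t in Set.Ici (0:ℝ), κ t y K) < ∞ := by
  intro y K hK
  refine (hK.hasIntegrableMajorant_of_nhds fun x _ ↦ ?_).lintegral_lt_top
  obtain ⟨a, ha, c, hc₀, hc, hA⟩ := exists_mem_nhds_add_kernel_le_one hlink hb x
  exact ⟨_, hA, hasIntegrableMajorant_kernel_setOf_add_le_one hsub hsemi hlink y ha hc₀ hc⟩

/-- Getoor-type transience result: if the killing time `ζ` of a Markov process on a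
locally compact metrizable space satisfies `P_x(ζ ∈ (0,∞)) = 1` for all `x` and
`x ↦ E_x[f(ζ)]` is continuous for every bounded continuous `f`, then the potential
measure of every compact set is finite. Here `κ t x` is the transition subprobability at
time `t` and `ν x` is the law of `ζ` under `P_x`, linked by `κ t x univ = ν x (t,∞)`. -/
theorem getoor_transience
    {E : Type*} [MeasurableSpace E] [TopologicalSpace E]
    [LocallyCompactSpace E] [TopologicalSpace.MetrizableSpace E]
    (κ : ℝ → ProbabilityTheory.Kernel E E)
    (hsub : ∀ t : ℝ, ∀ x : E, κ t x Set.univ ≤ 1)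
    -- Chapman–Kolmogorov semigroup property
    (hsemi : ∀ s t : ℝ, 0 ≤ s → 0 ≤ t → ∀ x : E, ∀ A : Set E, MeasurableSet A →
      κ (s + t) x A = ∫⁻ y, κ t y A ∂(κ s x))
    -- the law of the killing time
    (ν : E → Measure ℝ) (hνprob : ∀ x, IsProbabilityMeasure (ν x))
    -- (a) `P_x(ζ ∈ (0,∞)) = 1` for all `x`
    (ha : ∀ x : E, ν x (Set.Ioi (0:ℝ)) = 1)
    -- survival link: `P_x(ζ > t) = κ t x univ`
    (hlink : ∀ t : ℝ, 0 ≤ t → ∀ x : E, κ t x Set.univ = ν x (Set.Ioi t))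
    -- (b) weak continuity of the killing time in the initial condition
    (hb : ∀ f : BoundedContinuousFunction ℝ ℝ,
      Continuous fun x : E => ∫ t : ℝ, f t ∂(ν x)) :
    ∀ y : E, ∀ K : Set E, IsCompact K →
      (∫⁻ t in Set.Ici (0:ℝ), κ t y K) < ∞ :=
  getoor_transience_general κ hsub hsemi ν hνprob hlink hb
end
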